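/- Let F : 𝒜 → ℬ be a left adjoint between abelian categories with cotorsion pairs (𝒟, ℰ) on 𝒜 and (𝒟′, ℰ′) on ℬ. Assume 𝒟 is F-right split and F(𝒟) ⊆ 𝒟′. Then for every short exact sequence of cochain complexes 0 → A• → B• → D• → 0 in Ch(𝒜) whose cokernel D• is a 𝒟-complex, the sequence 0 → F(A•) → F(B•) → F(D•) → 0, obtained by applying F degreewise, is a short exact sequence of cochain complexes in Ch(ℬ), and F(D•) is a 𝒟′-complex. -/

import Mathlib

open CategoryTheory CategoryTheory.Limits CategoryTheory.Abelian

universe w w' v v' u u'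

/-- `(𝒟, ℰ)` is a cotorsion pair on the abelian category `C`. -/
def IsCotorsionPair {C : Type u} [Category.{v} C] [Abelian C] [HasExt.{w} C]
    (𝒟 ℰ : Set C) : Prop :=
  (∀ X : C, X ∈ 𝒟 ↔ ∀ Y ∈ ℰ, Subsingleton (Ext X Y 1)) ∧
  (∀ Y : C, Y ∈ ℰ ↔ ∀ X ∈ 𝒟, Subsingleton (Ext X Y 1))

/-- A class `𝒮` is `F`-right split if every short exact sequence `0 → X → Y → S → 0` with
`S ∈ 𝒮` remains short exact after applying `F`. -/
def RightSplit {A : Type u} [Category.{v} A] [Abelian A]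
    {B : Type u'} [Category.{v'} B] [Abelian B]
    (F : A ⥤ B) [F.PreservesZeroMorphisms] (𝒮 : Set A) : Prop :=
  ∀ S : ShortComplex A, S.ShortExact → S.X₃ ∈ 𝒮 → (S.map F).ShortExact

/-- The class `𝒟̃` of `𝒟`-complexes: acyclic complexes `A` with `Zⁿ A ∈ 𝒟` for all `n`. -/
def DComplexes {C : Type u} [Category.{v} C] [Abelian C] (𝒟 : Set C) :
    Set (CochainComplex C ℤ) :=
  {A | (∀ n : ℤ, A.ExactAt n) ∧ ∀ n : ℤ, A.cycles n ∈ 𝒟}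

/-!
Write `D = S.X₃`. Acyclicity splices `D` from the short exact sequences
`0 → Zⁿ D → Dⁿ → Zⁿ⁺¹ D → 0`, whose ends lie in `𝒟`. The left class of a cotorsion pair is closed
under extensions, so every `Dⁿ` lies in `𝒟`, and right splitness keeps the degreewise sequences
`0 → Aⁿ → Bⁿ → Dⁿ → 0` exact under `F`. Right splitness also keeps the splicing sequences exact,
so `F(D)` is spliced from `0 → F(Zⁿ D) → F(Dⁿ) → F(Zⁿ⁺¹ D) → 0`: it is acyclic and
`Zⁿ F(D) ≅ F(Zⁿ D) ∈ 𝒟'`.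
-/

namespace CategoryTheory.Abelian.Ext

variable {C : Type u} [Category.{v} C] [Abelian C] [HasExt.{w} C]

lemma subsingleton_of_iso {X X' : C} (e : X ≅ X') (Y : C) (n : ℕ)
    [Subsingleton (Ext X Y n)] : Subsingleton (Ext X' Y n) :=
  Function.Injective.subsingleton (f := fun x => (mk₀ e.hom).comp x (zero_add n)) fun a b hab => by
    simpa [mk₀_comp_mk₀_assoc] using congrArg (fun x => (mk₀ e.inv).comp x (zero_add n)) hab

lemma subsingleton_of_shortExact {S : ShortComplex C} (hS : S.ShortExact) (Y : C) (n : ℕ)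
    [Subsingleton (Ext S.X₁ Y n)] [Subsingleton (Ext S.X₃ Y n)] :
    Subsingleton (Ext S.X₂ Y n) := by
  refine ⟨fun a b => ?_⟩
  have (x : Ext S.X₂ Y n) : x = 0 := by
    obtain ⟨x₃, rfl⟩ := contravariant_sequence_exact₂ hS Y x (Subsingleton.elim _ 0)
    rw [Subsingleton.elim x₃ 0, comp_zero]
  rw [this a, this b]

end CategoryTheory.Abelian.Ext

namespace IsCotorsionPair

variable {C : Type u} [Category.{v} C] [Abelian C] [HasExt.{w} C] {𝒟 ℰ : Set C}

lemma mem_left_of_iso (h : IsCotorsionPair 𝒟 ℰ) {X X' : C} (e : X ≅ X') (hX : X ∈ 𝒟) :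
    X' ∈ 𝒟 := by
  rw [h.1] at hX ⊢
  intro Y hY
  have := hX Y hY
  exact Ext.subsingleton_of_iso e Y 1

lemma mem_left_of_shortExact (h : IsCotorsionPair 𝒟 ℰ) {S : ShortComplex C} (hS : S.ShortExact)
    (h₁ : S.X₁ ∈ 𝒟) (h₃ : S.X₃ ∈ 𝒟) : S.X₂ ∈ 𝒟 := by
  rw [h.1] at h₁ h₃ ⊢
  intro Y hY
  have := h₁ Y hY
  have := h₃ Y hY
  exact Ext.subsingleton_of_shortExact hS Y 1

end IsCotorsionPair

namespace CochainComplex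

open HomologicalComplex

variable {C : Type u} [Category.{v} C] [Abelian C] (K : CochainComplex C ℤ)

lemma exactAt_succ_iff_epi_toCycles (n : ℤ) : K.ExactAt (n + 1) ↔ Epi (K.toCycles n (n + 1)) := by
  have hprev : (ComplexShape.up ℤ).prev (n + 1) = n := (ComplexShape.up ℤ).prev_eq' rfl
  have hnext : (ComplexShape.up ℤ).next (n + 1) = n + 1 + 1 := (ComplexShape.up ℤ).next_eq' rfl
  rw [K.exactAt_iff' n (n + 1) (n + 1 + 1) hprev hnext, ShortComplex.exact_iff_epi_toCycles,
    ← K.toCycles_cyclesIsoSc'_hom n (n + 1) (n + 1 + 1) hprev hnext]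
  exact epi_comp_iff_of_isIso _ _

noncomputable def cyclesShortComplex (n : ℤ) : ShortComplex C :=
  ShortComplex.mk (K.iCycles n) (K.toCycles n (n + 1)) (by
    rw [← cancel_mono (K.iCycles (n + 1)), Category.assoc, toCycles_i, iCycles_d, zero_comp])

lemma cyclesShortComplex_shortExact (n : ℤ) (hK : K.ExactAt (n + 1)) :
    (K.cyclesShortComplex n).ShortExact :=
  have := (K.exactAt_succ_iff_epi_toCycles n).1 hK
  .mk' (ShortComplex.exact_of_f_is_kernel _ (isKernelOfComp (K.iCycles (n + 1)) _
    (K.cyclesIsKernel n (n + 1) ((ComplexShape.up ℤ).next_eq' rfl)) _ (K.toCycles_i n (n + 1))))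
    (inferInstanceAs (Mono (K.iCycles n))) this

section Map

variable {C' : Type u'} [Category.{v'} C'] [Abelian C'] (F : C ⥤ C') [F.PreservesZeroMorphisms]
  {K}

/-- `F(Zⁿ K) → F(Kⁿ)` is a kernel of `F(dⁿ) = F(Kⁿ → Zⁿ⁺¹ K) ≫ F(Zⁿ⁺¹ K → Kⁿ⁺¹)`, because the
second factor stays mono. -/
noncomputable def mapCyclesIso (hK : ∀ n, ((K.cyclesShortComplex n).map F).ShortExact) (n : ℤ) :
    F.obj (K.cycles n) ≅ ((F.mapHomologicalComplex _).obj K).cycles n :=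
  IsLimit.conePointUniqueUpToIso
    (isKernelCompMono (hK n).fIsKernel (F.map (K.iCycles (n + 1))) (hg := (hK (n + 1)).mono_f)
      ((F.map_comp _ _).symm.trans (congrArg F.map (K.toCycles_i n (n + 1)))).symm)
    (((F.mapHomologicalComplex _).obj K).cyclesIsKernel n (n + 1)
      ((ComplexShape.up ℤ).next_eq' rfl))

lemma mapCyclesIso_hom_iCycles (hK : ∀ n, ((K.cyclesShortComplex n).map F).ShortExact)
    (n : ℤ) :
    (mapCyclesIso F hK n).hom ≫ ((F.mapHomologicalComplex _).obj K).iCycles n =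
      F.map (K.iCycles n) :=
  IsLimit.conePointUniqueUpToIso_hom_comp _ _ WalkingParallelPair.zero

lemma map_toCycles_comp_mapCyclesIso_hom
    (hK : ∀ n, ((K.cyclesShortComplex n).map F).ShortExact) (n : ℤ) :
    F.map (K.toCycles n (n + 1)) ≫ (mapCyclesIso F hK (n + 1)).hom =
      ((F.mapHomologicalComplex _).obj K).toCycles n (n + 1) := by
  apply (cancel_mono (((F.mapHomologicalComplex _).obj K).iCycles (n + 1))).1
  rw [Category.assoc, mapCyclesIso_hom_iCycles]
  exact ((F.map_comp _ _).symm.trans (congrArg F.map (K.toCycles_i n (n + 1)))).trans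
    (((F.mapHomologicalComplex _).obj K).toCycles_i n (n + 1)).symm

lemma exactAt_mapHomologicalComplex_obj
    (hK : ∀ n, ((K.cyclesShortComplex n).map F).ShortExact) (n : ℤ) :
    ((F.mapHomologicalComplex _).obj K).ExactAt n := by
  obtain ⟨m, rfl⟩ : ∃ m, n = m + 1 := ⟨n - 1, by omega⟩
  rw [exactAt_succ_iff_epi_toCycles, ← map_toCycles_comp_mapCyclesIso_hom F hK]
  exact epi_comp' (hK m).epi_g inferInstance

end Map

end CochainComplex

theorem chainF_preserves_trivial_cofibrations_general
    {A : Type u} [Category.{v} A] [Abelian A] [HasExt.{w} A]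
    {B : Type u'} [Category.{v'} B] [Abelian B] [HasExt.{w'} B]
    (F : A ⥤ B) [F.Additive]
    (𝒟 ℰ : Set A) (𝒟' ℰ' : Set B)
    (h : IsCotorsionPair 𝒟 ℰ) (h' : IsCotorsionPair 𝒟' ℰ')
    (hsplit : RightSplit F 𝒟) (hobj : ∀ D ∈ 𝒟, F.obj D ∈ 𝒟')
    (S : ShortComplex (CochainComplex A ℤ)) (hS : S.ShortExact)
    (hD : S.X₃ ∈ DComplexes 𝒟) :
    (S.map (F.mapHomologicalComplex (ComplexShape.up ℤ))).ShortExact ∧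
    (F.mapHomologicalComplex (ComplexShape.up ℤ)).obj S.X₃ ∈ DComplexes 𝒟' := by
  obtain ⟨hexact, hcycles⟩ := hD
  have hZ (n : ℤ) : (S.X₃.cyclesShortComplex n).ShortExact :=
    S.X₃.cyclesShortComplex_shortExact n (hexact (n + 1))
  have hFZ (n : ℤ) : ((S.X₃.cyclesShortComplex n).map F).ShortExact :=
    hsplit _ (hZ n) (hcycles (n + 1))
  refine ⟨?_, S.X₃.exactAt_mapHomologicalComplex_obj F hFZ, fun n => ?_⟩
  · rw [HomologicalComplex.shortExact_iff_degreewise_shortExact] at hS ⊢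
    exact fun n => hsplit _ (hS n) (h.mem_left_of_shortExact (hZ n) (hcycles n) (hcycles (n + 1)))
  · exact h'.mem_left_of_iso (S.X₃.mapCyclesIso F hFZ n) (hobj _ (hcycles n))

/-- If `𝒟` is `F`-right split and `F(𝒟) ⊆ 𝒟′`, then the degreewise application of `F`
sends a short exact sequence of cochain complexes whose cokernel is a `𝒟`-complex to a
short exact sequence of cochain complexes whose cokernel is a `𝒟′`-complex. -/
theorem chainF_preserves_trivial_cofibrations
    {A : Type u} [Category.{v} A] [Abelian A] [HasExt.{w} A]
    {B : Type u'} [Category.{v'} B] [Abelian B] [HasExt.{w'} B]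
    (F : A ⥤ B) (G : B ⥤ A) [F.Additive] [G.Additive] (adj : F ⊣ G)
    (𝒟 ℰ : Set A) (𝒟' ℰ' : Set B)
    (h : IsCotorsionPair 𝒟 ℰ) (h' : IsCotorsionPair 𝒟' ℰ')
    (hsplit : RightSplit F 𝒟) (hobj : ∀ D ∈ 𝒟, F.obj D ∈ 𝒟')
    (S : ShortComplex (CochainComplex A ℤ)) (hS : S.ShortExact)
    (hD : S.X₃ ∈ DComplexes 𝒟) :
    (S.map (F.mapHomologicalComplex (ComplexShape.up ℤ))).ShortExact ∧
    (F.mapHomologicalComplex (ComplexShape.up ℤ)).obj S.X₃ ∈ DComplexes 𝒟' :=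
  chainF_preserves_trivial_cofibrations_general F 𝒟 ℰ 𝒟' ℰ' h h' hsplit hobj S hS hD
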